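/- Let g be an n-dimensional nilpotent real Lie algebra. Then there exists a basis e¹, …, eⁿ of g* such that for each i, the alternating 2-form de^i (given by de^i(X,Y) = −e^i([X,Y])) lies in the linear span of {e^j ∧ e^k : 1 ≤ j < k ≤ i−1}. In particular, the filtration defined by g*₁ = ker d and g*_i = {v ∈ g* : dv ∈ Λ² g*_{i−1}} satisfies g*_s = g* for some s. -/

import Mathlib

set_option linter.unusedSectionVars false

open scoped TensorProduct

noncomputable section

namespace GKTest

variable {g : Type} [LieRing g] [LieAlgebra ℝ g]

/-- Auxiliary reindexing: `skip2 i j m` is the `m`-th element (0-indexed) of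
`{0,…,k} \ {i,j}` when `i < j`. -/
def skip2 (i j m : ℕ) : ℕ := if m < i then m else if m + 1 < j then m + 1 else m + 2

lemma skip2_le (i j m : ℕ) : skip2 i j m ≤ m + 2 := by
  unfold skip2; split_ifs <;> omega

/-- The argument list `(⁅X i, X j⁆, X₀, …, X̂ᵢ, …, X̂ⱼ, …, X_k)` used in the
Chevalley–Eilenberg formula. -/
def ceArg {k : ℕ} (X : Fin (k + 1) → g) (i j : Fin (k + 1)) : Fin k → g :=
  fun l =>
    if h : (l : ℕ) = 0 then ⁅X i, X j⁆
    else X ⟨skip2 (i : ℕ) (j : ℕ) ((l : ℕ) - 1), by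
      have h1 := skip2_le (i : ℕ) (j : ℕ) ((l : ℕ) - 1)
      have h2 := l.isLt
      omega⟩

/-- The Chevalley–Eilenberg differential of an alternating `k`-form, as a raw function:
`dα(X₀,…,X_k) = ∑_{i<j} (−1)^{i+j} α(⁅X_i,X_j⁆, X₀,…,X̂ᵢ,…,X̂ⱼ,…,X_k)`. -/
def ceD {k : ℕ} (α : g [⋀^Fin k]→ₗ[ℝ] ℝ) (X : Fin (k + 1) → g) : ℝ :=
  ∑ i : Fin (k + 1), ∑ j : Fin (k + 1),
    if (i : ℕ) < (j : ℕ) then (-1 : ℝ) ^ ((i : ℕ) + (j : ℕ)) * α (ceArg X i j) else 0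

end GKTest

namespace GKTest

/-- `ω ∈ Λ²S`: the 2-form `ω` is a finite sum of wedges of 1-forms belonging to `S`. -/
def inLambdaTwo {g : Type} [LieRing g] [LieAlgebra ℝ g]
    (S : Set (Module.Dual ℝ g)) (ω : g → g → ℝ) : Prop :=
  ∃ (m : ℕ) (a b : Fin m → Module.Dual ℝ g),
    (∀ l, a l ∈ S) ∧ (∀ l, b l ∈ S) ∧
    ∀ X Y, ω X Y = ∑ l, (a l X * b l Y - a l Y * b l X)

/-- The filtration of `g*` given by `g*₀ = {0}`, `g*ᵢ₊₁ = {v : dv ∈ Λ² g*ᵢ}`;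
in particular `g*₁ = ker d`. Here `dv` is the 2-form `(X,Y) ↦ −v(⁅X,Y⁆)`. -/
def ceFilt (g : Type) [LieRing g] [LieAlgebra ℝ g] : ℕ → Set (Module.Dual ℝ g)
  | 0 => {0}
  | (i + 1) => {v | inLambdaTwo (ceFilt g i) fun X Y => -(v ⁅X, Y⁆)}

end GKTest

/-! Since `g` is nilpotent, every proper ideal is strictly contained in its normalizer (the
upper central series reaches `g`). Adding one vector of the normalizer at a time yields a basis
`b₀, …, bₙ₋₁` of `g` with `⁅g, b k⁆ ⊆ span {b l | k < l}`. For the dual basis `eⁱ` the coefficient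
`eⁱ⁅b j, b k⁆` of `deⁱ` therefore vanishes unless `j, k < i`, so `deⁱ` is a combination of the
`eʲ ∧ eᵏ` with `j < k < i`. By strong induction `eⁱ ∈ g*ᵢ₊₁`, and as every `g*ᵢ` is a subspace,
`g*ₙ = g*`. -/

open Set Submodule Module

theorem Finset.sum_sum_mul_mul_eq_sum_sum_lt_of_antisymm {R ι : Type*} [CommRing R] [Fintype ι] [LinearOrder ι]
    (t : ι → ι → R) (ht₀ : ∀ j, t j j = 0) (ht : ∀ j k, t k j = -t j k) (x y : ι → R) :
    ∑ j, ∑ k, x j * y k * t j k = ∑ j, ∑ k, if j < k then t j k * (x j * y k - y j * x k) else 0 := by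
  set f : ι → ι → R := fun j k => x j * y k * t j k
  have hsplit : ∀ j k, f j k = (if j < k then f j k else 0) + if k < j then f j k else 0 := by
    intro j k
    rcases lt_trichotomy j k with h | rfl | h
    · simp [h, h.not_gt]
    · simp [f, ht₀]
    · simp [h, h.not_gt]
  calc ∑ j, ∑ k, f j k
      = ∑ j, ∑ k, (if j < k then f j k else 0) + ∑ j, ∑ k, if k < j then f j k else 0 := by
        simp_rw [← Finset.sum_add_distrib, ← hsplit]
    _ = ∑ j, ∑ k, ((if j < k then f j k else 0) + if j < k then f k j else 0) := by
        rw [Finset.sum_comm (f := fun j k => if k < j then f j k else 0)]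
        simp_rw [← Finset.sum_add_distrib]
    _ = _ := by
        refine Finset.sum_congr rfl fun j _ => Finset.sum_congr rfl fun k _ => ?_
        split_ifs
        · simp only [f, ht j k]; ring
        · simp

namespace LieSubmodule

variable {R L M : Type*} [CommRing R] [LieRing L] [LieAlgebra R L] [AddCommGroup M] [Module R M]
  [LieRingModule L M] [LieModule R L M] [LieModule.IsNilpotent L M]

theorem lt_normalizer_of_ne_top {N : LieSubmodule R L M} (hN : N ≠ ⊤) : N < N.normalizer := by
  refine N.le_normalizer.lt_of_ne fun h => hN ?_
  obtain ⟨k, hk⟩ := (LieModule.isNilpotent_iff_exists_ucs_eq_top R).mp ‹_›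
  exact eq_top_iff.mpr (hk ▸ ucs_le_of_normalizer_eq_self h.symm k)

end LieSubmodule

namespace LieModule

variable (K L M : Type*) [Field K] [LieRing L] [LieAlgebra K L] [AddCommGroup M] [Module K M]
  [LieRingModule L M] [LieModule K L M] [IsNilpotent L M]

theorem exists_linearIndependent_lie_mem_span_Ioi {j : ℕ} (hj : j ≤ finrank K M) :
    ∃ v : Fin j → M, LinearIndependent K v ∧ ∀ (x : L) k, ⁅x, v k⁆ ∈ span K (v '' Ioi k) := by
  induction j with
  | zero => exact ⟨Fin.elim0, linearIndependent_empty_type, fun _ k => k.elim0⟩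
  | succ j ih =>
    obtain ⟨v, hv, hlie⟩ := ih (by omega)
    let N : LieSubmodule K L M :=
      { span K (range v) with
        lie_mem := fun {x y} (hy : y ∈ span K (range v)) => show ⁅x, y⁆ ∈ span K (range v) by
          induction hy using Submodule.span_induction with
          | mem y hy =>
            obtain ⟨k, rfl⟩ := hy
            exact span_mono (image_subset_range _ _) (hlie x k)
          | zero => simp
          | add y z _ _ hy hz => rw [lie_add]; exact add_mem hy hz
          | smul r y _ hy => rw [lie_smul]; exact smul_mem _ r hy }
    have hN : N ≠ ⊤ := fun h => by
      have hspan : span K (range v) = ⊤ := congrArg LieSubmodule.toSubmodule h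
      have := finrank_span_eq_card hv
      rw [hspan, finrank_top, Fintype.card_fin] at this
      omega
    obtain ⟨w, hw, hwN⟩ := SetLike.exists_of_lt (LieSubmodule.lt_normalizer_of_ne_top hN)
    refine ⟨Fin.cons w v, linearIndependent_finCons.mpr ⟨hv, hwN⟩, fun x k => ?_⟩
    refine Fin.cases ?_ (fun k => ?_) k
    · refine span_mono ?_ ((N.mem_normalizer w).mp hw x)
      rintro _ ⟨i, rfl⟩
      exact ⟨i.succ, Fin.succ_pos i, Fin.cons_succ _ _ _⟩
    · refine span_mono ?_ (hlie x k)
      rintro _ ⟨i, hi, rfl⟩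
      exact ⟨i.succ, Fin.succ_lt_succ_iff.mpr hi, Fin.cons_succ _ _ _⟩

theorem exists_basis_lie_mem_span_Ioi [FiniteDimensional K M] :
    ∃ b : Basis (Fin (finrank K M)) K M, ∀ (x : L) k, ⁅x, b k⁆ ∈ span K (b '' Ioi k) := by
  obtain ⟨v, hv, hlie⟩ := exists_linearIndependent_lie_mem_span_Ioi K L M le_rfl
  refine ⟨basisOfLinearIndependentOfCardEqFinrank' v hv (Fintype.card_fin _), ?_⟩
  simpa using hlie

end LieModule

theorem Module.Basis.neg_dualBasis_lie_eq_sum {K L : Type*} [Field K] [LieRing L] [LieAlgebra K L]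
    {n : ℕ} (b : Basis (Fin n) K L) (hb : ∀ (x : L) k, ⁅x, b k⁆ ∈ span K (b '' Ioi k))
    (i : Fin n) (X Y : L) :
    -(b.dualBasis i ⁅X, Y⁆) = ∑ j : Fin n, ∑ k : Fin n,
      if (j : ℕ) < (k : ℕ) ∧ (k : ℕ) < (i : ℕ) then
        -(b.dualBasis i ⁅b j, b k⁆) * (b.dualBasis j X * b.dualBasis k Y -
          b.dualBasis j Y * b.dualBasis k X)
      else 0 := by
  simp only [b.dualBasis_apply]
  set c : Fin n → Fin n → K := fun j k => -(b.repr ⁅b j, b k⁆ i)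
  have hc : ∀ j k, i ≤ k → c j k = 0 := fun j k hik => by
    have hsupp := b.mem_span_image.mp (hb (b j) k)
    have : i ∉ (b.repr ⁅b j, b k⁆).support := fun h => (hsupp h).not_ge hik
    simpa [c] using this
  have hexpand : -(b.repr ⁅X, Y⁆ i) = ∑ j, ∑ k, b.repr X j * b.repr Y k * c j k := by
    conv_lhs => rw [← b.sum_repr X, ← b.sum_repr Y, sum_lie_sum]
    simp only [smul_lie, lie_smul, map_sum, map_smul, Finsupp.coe_finsetSum, Finset.sum_apply,
      Finsupp.smul_apply, smul_eq_mul, ← Finset.sum_neg_distrib]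
    exact Finset.sum_congr rfl fun j _ => Finset.sum_congr rfl fun k _ => by ring
  have hc₀ : ∀ j, c j j = 0 := fun j => by simp [c]
  have hc_anti : ∀ j k, c k j = -c j k := fun j k => by
    simp only [c, ← lie_skew (b j), map_neg, Finsupp.neg_apply, neg_neg]
  rw [hexpand, Finset.sum_sum_mul_mul_eq_sum_sum_lt_of_antisymm c hc₀ hc_anti]
  refine Finset.sum_congr rfl fun j _ => Finset.sum_congr rfl fun k _ => ?_
  by_cases hk : k < i
  · simp [hk, c]
  · simp [hk, hc j k (not_lt.mp hk)]

namespace GKTest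

variable {g : Type} [LieRing g] [LieAlgebra ℝ g]

variable (g) in
def ceD₁ : Dual ℝ g →ₗ[ℝ] (g → g → ℝ) where
  toFun v X Y := -(v ⁅X, Y⁆)
  map_add' v w := by ext; simp [add_comm]
  map_smul' r v := by ext; simp

theorem ceFilt_succ (i : ℕ) : ceFilt g (i + 1) = {v | inLambdaTwo (ceFilt g i) (ceD₁ g v)} := rfl

section inLambdaTwo

variable {S T : Set (Dual ℝ g)} {ω ω' : g → g → ℝ}

theorem inLambdaTwo_of_sum {ι : Type*} [Fintype ι] (a b : ι → Dual ℝ g) (ha : ∀ p, a p ∈ S)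
    (hb : ∀ p, b p ∈ S) (hω : ∀ X Y, ω X Y = ∑ p, (a p X * b p Y - a p Y * b p X)) :
    inLambdaTwo S ω := by
  let σ := (Fintype.equivFin ι).symm
  refine ⟨Fintype.card ι, a ∘ σ, b ∘ σ, fun l => ha _, fun l => hb _, fun X Y => ?_⟩
  rw [hω]
  exact (σ.sum_comp fun p => a p X * b p Y - a p Y * b p X).symm

theorem inLambdaTwo_zero : inLambdaTwo S (0 : g → g → ℝ) :=
  ⟨0, Fin.elim0, Fin.elim0, fun l => l.elim0, fun l => l.elim0, by simp⟩

theorem inLambdaTwo_mono (hST : S ⊆ T) : inLambdaTwo S ω → inLambdaTwo T ω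
  | ⟨m, a, b, ha, hb, h⟩ => ⟨m, a, b, fun l => hST (ha l), fun l => hST (hb l), h⟩

theorem inLambdaTwo_add : inLambdaTwo S ω → inLambdaTwo S ω' → inLambdaTwo S (ω + ω')
  | ⟨_, a, b, ha, hb, h⟩, ⟨_, a', b', ha', hb', h'⟩ =>
    inLambdaTwo_of_sum (Sum.elim a a') (Sum.elim b b') (Sum.rec ha ha') (Sum.rec hb hb')
      fun X Y => by
        simp only [Pi.add_apply, h, h', Fintype.sum_sum_type, Sum.elim_inl, Sum.elim_inr]

theorem inLambdaTwo_smul (hS : ∀ (r : ℝ), ∀ a ∈ S, r • a ∈ S) (r : ℝ) :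
    inLambdaTwo S ω → inLambdaTwo S (r • ω)
  | ⟨m, a, b, ha, hb, h⟩ => ⟨m, r • a, b, fun l => hS r _ (ha l), hb, fun X Y => by
      simp only [Pi.smul_apply, smul_eq_mul, h, Finset.mul_sum, LinearMap.smul_apply]
      exact Finset.sum_congr rfl fun l _ => by ring⟩

end inLambdaTwo

theorem smul_mem_ceFilt (r : ℝ) : ∀ i, ∀ v ∈ ceFilt g i, r • v ∈ ceFilt g i
  | 0, _, rfl => by simp [ceFilt]
  | i + 1, v, hv => by
      show inLambdaTwo _ (ceD₁ g (r • v))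
      rw [map_smul]
      exact inLambdaTwo_smul (fun r => smul_mem_ceFilt r i) r hv

variable (g) in
def ceFiltSubmodule (i : ℕ) : Submodule ℝ (Dual ℝ g) where
  carrier := ceFilt g i
  zero_mem' := by
    cases i with
    | zero => rfl
    | succ i => simpa [ceFilt_succ] using inLambdaTwo_zero
  add_mem' {v w} hv hw := by
    cases i with
    | zero => rw [hv, hw]; simp [ceFilt]
    | succ i =>
      show inLambdaTwo _ (ceD₁ g (v + w))
      rw [map_add]
      exact inLambdaTwo_add hv hw
  smul_mem' r v := smul_mem_ceFilt r i v

theorem ceFilt_mono : Monotone (ceFilt g) :=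
  monotone_nat_of_le_succ fun i => by
    induction i with
    | zero => rintro v rfl; exact (ceFiltSubmodule g 1).zero_mem
    | succ i ih => exact fun v => inLambdaTwo_mono ih

theorem basis_mem_ceFilt {n : ℕ} (e : Basis (Fin n) ℝ (Dual ℝ g))
    (c : Fin n → Fin n → Fin n → ℝ)
    (he : ∀ i X Y, -(e i ⁅X, Y⁆) = ∑ j : Fin n, ∑ k : Fin n,
      if (j : ℕ) < (k : ℕ) ∧ (k : ℕ) < (i : ℕ) then
        c i j k * (e j X * e k Y - e j Y * e k X) else 0)
    (i : Fin n) : e i ∈ ceFilt g (i + 1) := by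
  induction i using WellFoundedLT.induction with
  | _ i ih =>
  have hmem : ∀ j : Fin n, (j : ℕ) < i → e j ∈ ceFilt g i := fun j hj =>
    ceFilt_mono (by omega) (ih j hj)
  let ι := {p : Fin n × Fin n // (p.1 : ℕ) < p.2 ∧ (p.2 : ℕ) < i}
  refine inLambdaTwo_of_sum (ι := ι) (fun p => c i p.1.1 p.1.2 • e p.1.1) (fun p => e p.1.2)
    (fun p => smul_mem_ceFilt _ _ _ (hmem _ (p.2.1.trans p.2.2))) (fun p => hmem _ p.2.2)
    fun X Y => ?_
  rw [he i X Y, ← Fintype.sum_prod_type', ← Finset.sum_filter]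
  refine (Finset.sum_subtype _ (fun p => Finset.mem_filter_univ p) _).trans
    (Finset.sum_congr rfl fun p _ => ?_)
  simp only [LinearMap.smul_apply, smul_eq_mul]
  ring

theorem ceFilt_eq_univ {n : ℕ} (e : Basis (Fin n) ℝ (Dual ℝ g))
    (c : Fin n → Fin n → Fin n → ℝ)
    (he : ∀ i X Y, -(e i ⁅X, Y⁆) = ∑ j : Fin n, ∑ k : Fin n,
      if (j : ℕ) < (k : ℕ) ∧ (k : ℕ) < (i : ℕ) then
        c i j k * (e j X * e k Y - e j Y * e k X) else 0) :
    ceFilt g n = univ := by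
  refine eq_univ_of_forall fun v => ?_
  change v ∈ ceFiltSubmodule g n
  rw [← e.sum_repr v]
  exact sum_mem fun i _ => smul_mem _ _ (ceFilt_mono (by omega) (basis_mem_ceFilt e c he i))

/-- An `n`-dimensional nilpotent real Lie algebra admits a basis
`e¹, …, eⁿ` of `g*` such that each `deⁱ` (the 2-form `(X,Y) ↦ −eⁱ(⁅X,Y⁆)`) lies in the
span of `{eʲ ∧ eᵏ : j < k < i}`; in particular, the filtration `g*₁ = ker d`,
`g*ᵢ = {v : dv ∈ Λ²g*ᵢ₋₁}` exhausts `g*` at some finite stage `s`. -/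
theorem nilpotent_exists_filtered_basis
    (g : Type) [LieRing g] [LieAlgebra ℝ g] [FiniteDimensional ℝ g]
    [LieRing.IsNilpotent g]
    (n : ℕ) (hn : Module.finrank ℝ g = n) :
    (∃ e : Module.Basis (Fin n) ℝ (Module.Dual ℝ g),
      ∀ i : Fin n, ∃ c : Fin n → Fin n → ℝ, ∀ X Y : g,
        -(e i ⁅X, Y⁆) = ∑ j : Fin n, ∑ k : Fin n,
          (if (j : ℕ) < (k : ℕ) ∧ (k : ℕ) < (i : ℕ) then
            c j k * (e j X * e k Y - e j Y * e k X) else 0)) ∧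
    (∃ s : ℕ, ceFilt g s = Set.univ) := by
  subst hn
  obtain ⟨b, hb⟩ := LieModule.exists_basis_lie_mem_span_Ioi ℝ g g
  exact ⟨⟨b.dualBasis, fun i => ⟨_, b.neg_dualBasis_lie_eq_sum hb i⟩⟩, _,
    ceFilt_eq_univ b.dualBasis _ (b.neg_dualBasis_lie_eq_sum hb)⟩

end GKTest
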